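/- Let w ∈ {+,0,-}^{3n} be a word with n of each letter satisfying the lattice condition (every prefix has at least as many +'s as 0's and at least as many 0's as -'s). Then, among lattice words with n of each letter, (+0-)^n = (+0-)(+0-)···(+0-) is the unique word w such that no other lattice word v satisfies v ≺ w under the swap relation; i.e., (+0-)^n is the unique minimal element for the transitive closure of ≺ restricted to lattice words. -/
import Mathlib


/-- Swap the entries of `w` at positions `a` and `b`. -/
def swapWord {N : ℕ} (w : Fin N → Fin 3) (a b : Fin N) : Fin N → Fin 3 :=
  Function.update (Function.update w a (w b)) b (w a)

/-- Number of occurrences of the letter `ℓ` among the first `k` letters of `w`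
(over the alphabet `{-,0,+}` encoded as `Fin 3` with `- = 0 < 0 = 1 < + = 2`). -/
def pcount {n : ℕ} (w : Fin (3 * n) → Fin 3) (k : ℕ) (ℓ : Fin 3) : ℕ :=
  (Finset.univ.filter (fun i : Fin (3 * n) => i.val < k ∧ w i = ℓ)).card

/-- Lattice condition: every prefix has `#(+) ≥ #(0) ≥ #(-)`. -/
def IsLatticeWord {n : ℕ} (w : Fin (3 * n) → Fin 3) : Prop :=
  ∀ k : ℕ, pcount w k 1 ≤ pcount w k 2 ∧ pcount w k 0 ≤ pcount w k 1

/-- The covering relation on lattice words: `v ≺ w` iff `v` is obtained from `w`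
by swapping positions `a < b` with `w a > w b` (i.e. `(w a, w b)` is one of
`(+,0)`, `(+,-)`, `(0,-)`) and `v` is again a lattice word. -/
def PrecL {n : ℕ} (v w : Fin (3 * n) → Fin 3) : Prop :=
  IsLatticeWord v ∧ ∃ a b : Fin (3 * n), a < b ∧ w b < w a ∧ v = swapWord w a b

/-- The word `(+0-)^n`. -/
def minWord (n : ℕ) : Fin (3 * n) → Fin 3 :=
  fun i => ⟨2 - i.val % 3, by omega⟩

lemma fin3_cases : ∀ c : Fin 3, c = 0 ∨ c = 1 ∨ c = 2 := by decide

lemma pcount_zero {n : ℕ} (w : Fin (3 * n) → Fin 3) (ℓ : Fin 3) : pcount w 0 ℓ = 0 := by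
  simp [pcount]

lemma pcount_succ {n : ℕ} (w : Fin (3 * n) → Fin 3) (k : ℕ) (h : k < 3 * n) (ℓ : Fin 3) :
    pcount w (k+1) ℓ = pcount w k ℓ + if w ⟨k, h⟩ = ℓ then 1 else 0 := by
  classical
  unfold pcount
  have hsplit : (Finset.univ.filter (fun i : Fin (3*n) => i.val < k + 1 ∧ w i = ℓ))
      = (Finset.univ.filter (fun i : Fin (3*n) => i.val < k ∧ w i = ℓ)) ∪
        (Finset.univ.filter (fun i : Fin (3*n) => i = ⟨k, h⟩ ∧ w i = ℓ)) := by
    ext i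
    simp only [Finset.mem_filter, Finset.mem_union, Finset.mem_univ, true_and]
    constructor
    · rintro ⟨hik, hi⟩
      rcases Nat.lt_succ_iff_lt_or_eq.mp hik with h' | h'
      · exact Or.inl ⟨h', hi⟩
      · exact Or.inr ⟨Fin.ext h', hi⟩
    · rintro (⟨h1, h2⟩ | ⟨h1, h2⟩)
      · exact ⟨Nat.lt_succ_of_lt h1, h2⟩
      · exact ⟨by rw [h1]; exact Nat.lt_succ_self k, h2⟩
  rw [hsplit, Finset.card_union_of_disjoint]
  · congr 1
    by_cases hw : w ⟨k, h⟩ = ℓ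
    · rw [if_pos hw]
      have : (Finset.univ.filter (fun i : Fin (3*n) => i = ⟨k, h⟩ ∧ w i = ℓ)) = {⟨k,h⟩} := by
        ext i
        simp only [Finset.mem_filter, Finset.mem_univ, true_and, Finset.mem_singleton]
        constructor
        · rintro ⟨h1, _⟩; exact h1
        · rintro rfl; exact ⟨rfl, hw⟩
      rw [this]; simp
    · rw [if_neg hw]
      have : (Finset.univ.filter (fun i : Fin (3*n) => i = ⟨k, h⟩ ∧ w i = ℓ)) = ∅ := by
        ext i
        simp only [Finset.mem_filter, Finset.mem_univ, true_and, Finset.notMem_empty, iff_false]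
        rintro ⟨rfl, h2⟩; exact hw h2
      rw [this]; simp
  · rw [Finset.disjoint_left]
    intro i hi1 hi2
    simp only [Finset.mem_filter, Finset.mem_univ, true_and] at hi1 hi2
    have := hi2.1
    subst this
    exact absurd hi1.1 (lt_irrefl k)

lemma pcount_succ_of_ge {n : ℕ} (w : Fin (3 * n) → Fin 3) (k : ℕ) (h : 3 * n ≤ k) (ℓ : Fin 3) :
    pcount w (k+1) ℓ = pcount w k ℓ := by
  unfold pcount
  congr 1
  apply Finset.filter_congr
  intro i _
  have := i.isLt
  constructor
  · rintro ⟨_, h2⟩; exact ⟨by omega, h2⟩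
  · rintro ⟨_, h2⟩; exact ⟨by omega, h2⟩

lemma pcount_mono {n : ℕ} (w : Fin (3 * n) → Fin 3) {k k' : ℕ} (h : k ≤ k') (ℓ : Fin 3) :
    pcount w k ℓ ≤ pcount w k' ℓ := by
  apply Finset.card_le_card
  intro i hi
  simp only [Finset.mem_filter, Finset.mem_univ, true_and] at hi ⊢
  exact ⟨lt_of_lt_of_le hi.1 h, hi.2⟩

lemma pcount_congr {n : ℕ} {w w' : Fin (3 * n) → Fin 3} {k : ℕ}
    (h : ∀ i : Fin (3 * n), i.val < k → w i = w' i) (ℓ : Fin 3) :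
    pcount w k ℓ = pcount w' k ℓ := by
  unfold pcount
  congr 1
  apply Finset.filter_congr
  intro i _
  constructor
  · rintro ⟨h1, h2⟩; exact ⟨h1, (h i h1).symm.trans h2⟩
  · rintro ⟨h1, h2⟩; exact ⟨h1, (h i h1).trans h2⟩

lemma pcount_no {n : ℕ} (w : Fin (3 * n) → Fin 3) {k k' : ℕ} (hk : k ≤ k') (ℓ : Fin 3)
    (h : ∀ j (hj : j < 3 * n), k ≤ j → j < k' → w ⟨j, hj⟩ ≠ ℓ) :
    pcount w k' ℓ = pcount w k ℓ := by
  induction k' with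
  | zero => have h0 : k = 0 := Nat.le_zero.mp hk; rw [h0]
  | succ m ih =>
    rcases Nat.eq_or_lt_of_le hk with h' | h'
    · rw [h']
    · have hm : k ≤ m := by omega
      by_cases hmn : m < 3 * n
      · rw [pcount_succ w m hmn, if_neg (h m hmn hm (Nat.lt_succ_self m))]
        simpa using ih hm (fun j hj h1 h2 => h j hj h1 (by omega))
      · rw [pcount_succ_of_ge w m (by omega)]
        exact ih hm (fun j hj h1 h2 => h j hj h1 (by omega))

lemma pcount_run {n : ℕ} (w : Fin (3 * n) → Fin 3) {k k' : ℕ} (hk : k ≤ k') (hk' : k' ≤ 3 * n)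
    (ℓ : Fin 3) (h : ∀ j (hj : j < 3 * n), k ≤ j → j < k' → w ⟨j, hj⟩ = ℓ) :
    pcount w k' ℓ = pcount w k ℓ + (k' - k) := by
  induction k' with
  | zero => have h0 : k = 0 := Nat.le_zero.mp hk; subst h0; simp
  | succ m ih =>
    rcases Nat.eq_or_lt_of_le hk with h' | h'
    · rw [h']; simp
    · have hm : k ≤ m := by omega
      have hmn : m < 3 * n := by omega
      rw [pcount_succ w m hmn, if_pos (h m hmn hm (Nat.lt_succ_self m))]
      rw [ih hm (by omega) (fun j hj h1 h2 => h j hj h1 (by omega))]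
      omega

lemma minWord_pcount (n : ℕ) (k : ℕ) (ℓ : Fin 3) :
    pcount (minWord n) k ℓ = (min k (3 * n) + ℓ.val) / 3 := by
  induction k with
  | zero => rw [pcount_zero]; omega
  | succ m ih =>
    by_cases hm : m < 3 * n
    · rw [pcount_succ (minWord n) m hm, ih]
      have hval : (minWord n ⟨m, hm⟩ = ℓ) ↔ (2 - m % 3 = ℓ.val) := by
        rw [Fin.ext_iff]; exact Iff.rfl
      have hl := ℓ.isLt
      by_cases hc : 2 - m % 3 = ℓ.val
      · rw [if_pos (hval.mpr hc)]; omega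
      · rw [if_neg (fun h => hc (hval.mp h))]; omega
    · rw [pcount_succ_of_ge (minWord n) m (by omega), ih]
      omega

lemma swapWord_apply {N : ℕ} (w : Fin N → Fin 3) (a b : Fin N) (i : Fin N) :
    swapWord w a b i = if i = b then w a else if i = a then w b else w i := by
  unfold swapWord
  rcases eq_or_ne i b with rfl | hib
  · simp
  · rw [Function.update_of_ne hib]
    rcases eq_or_ne i a with rfl | hia
    · simp [hib]
    · rw [Function.update_of_ne hia, if_neg hib, if_neg hia]

lemma swap_pcount {n : ℕ} (w : Fin (3 * n) → Fin 3) (a b : Fin (3 * n)) (hab : a < b)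
    (ℓ : Fin 3) (k : ℕ) :
    (k ≤ a.val → pcount (swapWord w a b) k ℓ = pcount w k ℓ) ∧
    (a.val < k → k ≤ b.val → pcount (swapWord w a b) k ℓ + (if w a = ℓ then 1 else 0)
        = pcount w k ℓ + (if w b = ℓ then 1 else 0)) ∧
    (b.val < k → pcount (swapWord w a b) k ℓ = pcount w k ℓ) := by
  have hb := b.isLt
  have ha := a.isLt
  have hab' : a.val < b.val := hab
  induction k with
  | zero =>
    refine ⟨fun _ => rfl, fun h1 h2 => by omega, fun h1 => by omega⟩
  | succ m ih =>
    obtain ⟨ih1, ih2, ih3⟩ := ih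
    by_cases hm : m < 3 * n
    · have hne : ∀ (c : Fin (3*n)), m ≠ c.val → (⟨m, hm⟩ : Fin (3*n)) ≠ c := by
        intro c h hc
        exact h (congrArg Fin.val hc)
      have heq : ∀ (c : Fin (3*n)), m = c.val → (⟨m, hm⟩ : Fin (3*n)) = c := fun c h => Fin.ext h
      have hstep := pcount_succ (swapWord w a b) m hm ℓ
      have hstep' := pcount_succ w m hm ℓ
      rw [swapWord_apply] at hstep
      refine ⟨?_, ?_, ?_⟩
      · intro h
        rw [hstep, hstep', if_neg (hne b (by omega)), if_neg (hne a (by omega)),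
          ih1 (by omega)]
      · intro h1 h2
        rcases Nat.eq_or_lt_of_le h1 with he | hlt
        · have hwa : w ⟨m, hm⟩ = w a := congrArg w (heq a (by omega))
          rw [hstep, hstep', if_neg (hne b (by omega)), if_pos (heq a (by omega)),
            ih1 (by omega), hwa]
          omega
        · rw [hstep, hstep', if_neg (hne b (by omega)), if_neg (hne a (by omega))]
          have := ih2 (by omega) (by omega)
          omega
      · intro h1
        rcases Nat.eq_or_lt_of_le (Nat.succ_le_of_lt h1) with he | hlt
        · have hwb : w ⟨m, hm⟩ = w b := congrArg w (heq b (by omega))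
          rw [hstep, hstep', if_pos (heq b (by omega)), hwb]
          have := ih2 (by omega) (by omega)
          omega
        · rw [hstep, hstep', if_neg (hne b (by omega)), if_neg (hne a (by omega)),
            ih3 (by omega)]
    · have hstep := pcount_succ_of_ge (swapWord w a b) m (by omega) ℓ
      have hstep' := pcount_succ_of_ge w m (by omega) ℓ
      refine ⟨fun h => by omega, fun h1 h2 => by omega, fun h1 => ?_⟩
      rw [hstep, hstep', ih3 (by omega)]

lemma card_filter_eq_pcount {n : ℕ} (w : Fin (3 * n) → Fin 3) (ℓ : Fin 3) :
    (Finset.univ.filter (fun i => w i = ℓ)).card = pcount w (3 * n) ℓ := by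
  unfold pcount
  congr 1
  apply Finset.filter_congr
  intro i _
  have := i.isLt
  constructor
  · intro h; exact ⟨this, h⟩
  · rintro ⟨_, h⟩; exact h

lemma fin3_val0 : ((0 : Fin 3) : ℕ) = 0 := rfl

lemma fin3_val1 : ((1 : Fin 3) : ℕ) = 1 := rfl

lemma fin3_val2 : ((2 : Fin 3) : ℕ) = 2 := rfl

lemma minWord_lattice (n : ℕ) : IsLatticeWord (minWord n) := by
  intro k
  rw [minWord_pcount, minWord_pcount, minWord_pcount, fin3_val0, fin3_val1, fin3_val2]
  omega

lemma minWord_count (n : ℕ) (ℓ : Fin 3) :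
    (Finset.univ.filter (fun i => minWord n i = ℓ)).card = n := by
  rw [card_filter_eq_pcount, minWord_pcount]
  have := ℓ.isLt
  omega

lemma fin3_d20 : ((2:Fin 3) = (0:Fin 3)) = False := by decide

lemma fin3_d21 : ((2:Fin 3) = (1:Fin 3)) = False := by decide

lemma fin3_d22 : ((2:Fin 3) = (2:Fin 3)) = True := by decide

lemma fin3_d10 : ((1:Fin 3) = (0:Fin 3)) = False := by decide

lemma fin3_d11 : ((1:Fin 3) = (1:Fin 3)) = True := by decide

lemma fin3_d12 : ((1:Fin 3) = (2:Fin 3)) = False := by decide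

lemma fin3_d01 : ((0:Fin 3) = (1:Fin 3)) = False := by decide

lemma fin3_d02 : ((0:Fin 3) = (2:Fin 3)) = False := by decide

lemma fin3_d00 : ((0:Fin 3) = (0:Fin 3)) = True := by decide

lemma pcount_succ' {n : ℕ} (w : Fin (3 * n) → Fin 3) (k : ℕ) (h : k < 3 * n) (ℓ : Fin 3) :
    pcount w (k+1) ℓ = pcount w k ℓ + if (w ⟨k, h⟩).val = ℓ.val then 1 else 0 := by
  rw [pcount_succ w k h ℓ]
  congr 1
  exact if_congr Fin.ext_iff rfl rfl

lemma minWord_minimal (n : ℕ) : ¬ ∃ v, PrecL v (minWord n) := by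
  rintro ⟨v, hv, a, b, hab, hlt, rfl⟩
  have ha := a.isLt
  have hb := b.isLt
  have hab' : a.val < b.val := hab
  have hlt' : 2 - b.val % 3 < 2 - a.val % 3 := hlt
  have key : ∀ ℓ : Fin 3,
      pcount (swapWord (minWord n) a b) (a.val+1) ℓ + (if 2 - a.val % 3 = ℓ.val then 1 else 0)
      = (a.val + 1 + ℓ.val) / 3 + (if 2 - b.val % 3 = ℓ.val then 1 else 0) := by
    intro ℓ
    have h := (swap_pcount (minWord n) a b hab ℓ (a.val+1)).2.1 (Nat.lt_succ_self _) (by omega)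
    rw [minWord_pcount, show min (a.val+1) (3*n) = a.val + 1 from by omega] at h
    simp only [minWord, Fin.ext_iff] at h
    exact h
  have h0 := key 0
  have h1 := key 1
  have h2 := key 2
  rw [fin3_val0] at h0
  rw [fin3_val1] at h1
  rw [fin3_val2] at h2
  obtain ⟨L1, L2⟩ := hv (a.val + 1)
  split_ifs at h0 h1 h2 <;> omega

lemma exists_prec {n : ℕ} (w : Fin (3 * n) → Fin 3) (hw : IsLatticeWord w)
    (hc : ∀ ℓ : Fin 3, pcount w (3 * n) ℓ = n) (hne : w ≠ minWord n) :
    ∃ v, PrecL v w := by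
  classical
  have hex : ∃ j, ∃ hj : j < 3 * n, w ⟨j, hj⟩ ≠ minWord n ⟨j, hj⟩ := by
    by_contra hcon
    push_neg at hcon
    exact hne (funext fun i => hcon i.val i.isLt)
  obtain ⟨i0, hi0n, hi0ne, hagree⟩ :
      ∃ i0, ∃ h : i0 < 3 * n, w ⟨i0, h⟩ ≠ minWord n ⟨i0, h⟩ ∧
        ∀ i : Fin (3 * n), i.val < i0 → w i = minWord n i := by
    obtain ⟨h1, h2⟩ := Nat.find_spec hex
    exact ⟨Nat.find hex, h1, h2, fun i hi => by
      by_contra hcc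
      exact Nat.find_min hex hi ⟨i.isLt, hcc⟩⟩
  have hpc : ∀ k, k ≤ i0 → ∀ ℓ : Fin 3, pcount w k ℓ = (min k (3 * n) + ℓ.val) / 3 := by
    intro k hk ℓ
    rw [pcount_congr (fun i hi => hagree i (by omega)) ℓ, minWord_pcount]
  have hwlt := (w ⟨i0, hi0n⟩).isLt
  have hval_ne : (w ⟨i0, hi0n⟩).val ≠ 2 - i0 % 3 := fun h => hi0ne (Fin.ext h)
  -- step equations at i0
  have e0 := pcount_succ' w i0 hi0n 0
  have e1 := pcount_succ' w i0 hi0n 1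
  have e2 := pcount_succ' w i0 hi0n 2
  rw [hpc i0 le_rfl 0, fin3_val0] at e0
  rw [hpc i0 le_rfl 1, fin3_val1] at e1
  rw [hpc i0 le_rfl 2, fin3_val2] at e2
  obtain ⟨L1, L2⟩ := hw (i0 + 1)
  rw [e1, e2] at L1
  rw [e0, e1] at L2
  -- the letter at the first disagreement must be `+`
  have hc2 : (w ⟨i0, hi0n⟩).val = 2 := by
    split_ifs at L1 L2 <;> omega
  have hr : i0 % 3 = 1 ∨ i0 % 3 = 2 := by omega
  have hw2 : w ⟨i0, hi0n⟩ = 2 := Fin.ext hc2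
  have p0 := hpc i0 le_rfl 0
  have p1 := hpc i0 le_rfl 1
  have p2 := hpc i0 le_rfl 2
  rw [fin3_val0] at p0
  rw [fin3_val1] at p1
  rw [fin3_val2] at p2
  rcases hr with hr1 | hr2
  · -- i0 % 3 = 1 : swap the + at i0 with the first non-+ letter after it (which is a 0)
    have hex2 : ∃ j, i0 < j ∧ ∃ hj : j < 3 * n, (w ⟨j, hj⟩).val ≠ 2 := by
      by_contra hcon
      push_neg at hcon
      have hrun : pcount w (3 * n) 2 = pcount w i0 2 + (3 * n - i0) := by
        apply pcount_run w (by omega) le_rfl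
        intro j hj h1 h2
        rcases eq_or_lt_of_le h1 with rfl | h1'
        · exact hw2
        · exact Fin.ext (hcon j h1' hj)
      rw [hc 2, p2] at hrun
      omega
    obtain ⟨j0, hj0i, hj0n, hj0ne, hj0min⟩ :
        ∃ j0, i0 < j0 ∧ ∃ hj : j0 < 3 * n, (w ⟨j0, hj⟩).val ≠ 2 ∧
          ∀ j, i0 < j → j < j0 → ∀ hj : j < 3 * n, (w ⟨j, hj⟩).val = 2 := by
      obtain ⟨h1, h2, h3⟩ := Nat.find_spec hex2
      refine ⟨Nat.find hex2, h1, h2, h3, fun j hj1 hj2 hj => ?_⟩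
      by_contra hcc
      exact Nat.find_min hex2 hj2 ⟨hj1, hj, hcc⟩
    have hmid2 : ∀ j (hj : j < 3 * n), i0 ≤ j → j < j0 → w ⟨j, hj⟩ = 2 := by
      intro j hj h1 h2
      rcases eq_or_lt_of_le h1 with rfl | h1'
      · exact hw2
      · exact Fin.ext (hj0min j h1' h2 hj)
    have g0 : pcount w j0 0 = pcount w i0 0 :=
      pcount_no w (by omega) 0 (fun j hj h1 h2 => by rw [hmid2 j hj h1 h2]; decide)
    have g1 : pcount w j0 1 = pcount w i0 1 :=
      pcount_no w (by omega) 1 (fun j hj h1 h2 => by rw [hmid2 j hj h1 h2]; decide)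
    have f0 := pcount_succ' w j0 hj0n 0
    have f1 := pcount_succ' w j0 hj0n 1
    rw [g0, p0, fin3_val0] at f0
    rw [g1, p1, fin3_val1] at f1
    obtain ⟨M1, M2⟩ := hw (j0 + 1)
    rw [f0, f1] at M2
    have hwlt2 := (w ⟨j0, hj0n⟩).isLt
    have hj0val : (w ⟨j0, hj0n⟩).val = 1 := by split_ifs at M2 <;> omega
    have hwj0 : w ⟨j0, hj0n⟩ = 1 := Fin.ext hj0val
    have habF : (⟨i0, hi0n⟩ : Fin (3 * n)) < ⟨j0, hj0n⟩ := hj0i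
    refine ⟨swapWord w ⟨i0, hi0n⟩ ⟨j0, hj0n⟩, ?_, ⟨i0, hi0n⟩, ⟨j0, hj0n⟩, habF, ?_, rfl⟩
    · intro k
      have s0 := swap_pcount w _ _ habF 0 k
      have s1 := swap_pcount w _ _ habF 1 k
      have s2 := swap_pcount w _ _ habF 2 k
      rcases le_or_gt k i0 with h1 | h1
      · rw [s0.1 h1, s1.1 h1, s2.1 h1]; exact hw k
      rcases le_or_gt k j0 with h2 | h2
      · have t0 := s0.2.1 h1 h2
        have t1 := s1.2.1 h1 h2
        have t2 := s2.2.1 h1 h2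
        rw [hw2, hwj0] at t0 t1 t2
        simp only [fin3_d20, fin3_d21, fin3_d22, fin3_d10, fin3_d11, fin3_d12,
          if_true, if_false] at t0 t1 t2
        have u2 : pcount w k 2 = pcount w i0 2 + (k - i0) :=
          pcount_run w (le_of_lt h1) (by omega) 2
            (fun j hj ha hb => hmid2 j hj ha (by omega))
        have u1 : pcount w k 1 = pcount w i0 1 :=
          pcount_no w (le_of_lt h1) 1
            (fun j hj ha hb => by rw [hmid2 j hj ha (by omega)]; decide)
        have u0 : pcount w k 0 = pcount w i0 0 :=
          pcount_no w (le_of_lt h1) 0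
            (fun j hj ha hb => by rw [hmid2 j hj ha (by omega)]; decide)
        constructor <;> omega
      · rw [s0.2.2 h2, s1.2.2 h2, s2.2.2 h2]; exact hw k
    · rw [hw2, hwj0]; decide
  · -- i0 % 3 = 2
    have hexc : ∃ j, i0 < j ∧ ∃ hj : j < 3 * n, (w ⟨j, hj⟩).val = 0 := by
      by_contra hcon
      push_neg at hcon
      have hno : pcount w (3 * n) 0 = pcount w (i0 + 1) 0 :=
        pcount_no w (by omega) 0
          (fun j hj h1 h2 he => hcon j (by omega) hj (congrArg Fin.val he))
      rw [hc 0, e0] at hno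
      split_ifs at hno <;> omega
    obtain ⟨c0, hc0i, hc0n, hc0val, hc0min⟩ :
        ∃ c0, i0 < c0 ∧ ∃ hc' : c0 < 3 * n, (w ⟨c0, hc'⟩).val = 0 ∧
          ∀ j, i0 < j → j < c0 → ∀ hj : j < 3 * n, (w ⟨j, hj⟩).val ≠ 0 := by
      obtain ⟨h1, h2, h3⟩ := Nat.find_spec hexc
      refine ⟨Nat.find hexc, h1, h2, h3, fun j hj1 hj2 hj hv => ?_⟩
      exact Nat.find_min hexc hj2 ⟨hj1, hj, hv⟩
    have hwc : w ⟨c0, hc0n⟩ = 0 := Fin.ext hc0val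
    set P : ℕ → Prop := fun j => ∃ hj : j < 3 * n, (w ⟨j, hj⟩).val = 1 with hP
    have h1lt : (1 : ℕ) < 3 * n := by omega
    have hP1 : P 1 := by
      refine ⟨h1lt, ?_⟩
      rw [hagree ⟨1, h1lt⟩ (by omega : (1:ℕ) < i0)]
      norm_num [minWord]
    have ha0P : P (Nat.findGreatest P (c0 - 1)) :=
      Nat.findGreatest_spec (by omega : (1:ℕ) ≤ c0 - 1) hP1
    have ha0le : Nat.findGreatest P (c0 - 1) ≤ c0 - 1 := Nat.findGreatest_le _
    have ha0gr : ∀ j, Nat.findGreatest P (c0 - 1) < j → j ≤ c0 - 1 → ¬ P j :=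
      fun j h1 h2 => Nat.findGreatest_is_greatest h1 h2
    obtain ⟨a0, ha0eq⟩ : ∃ a0, Nat.findGreatest P (c0 - 1) = a0 := ⟨_, rfl⟩
    rw [ha0eq] at ha0P ha0le ha0gr
    obtain ⟨ha0n, ha0val⟩ := ha0P
    have hwa0 : w ⟨a0, ha0n⟩ = 1 := Fin.ext ha0val
    by_cases hcase : i0 < a0
    · -- swap the 0 at a0 with the - at c0
      have habF : (⟨a0, ha0n⟩ : Fin (3 * n)) < ⟨c0, hc0n⟩ := by
        show a0 < c0; omega
      refine ⟨swapWord w ⟨a0, ha0n⟩ ⟨c0, hc0n⟩, ?_, ⟨a0, ha0n⟩, ⟨c0, hc0n⟩, habF, ?_, rfl⟩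
      · intro k
        have s0 := swap_pcount w _ _ habF 0 k
        have s1 := swap_pcount w _ _ habF 1 k
        have s2 := swap_pcount w _ _ habF 2 k
        rcases le_or_gt k a0 with h1 | h1
        · rw [s0.1 h1, s1.1 h1, s2.1 h1]; exact hw k
        rcases le_or_gt k c0 with h2 | h2
        · have t0 := s0.2.1 h1 h2
          have t1 := s1.2.1 h1 h2
          have t2 := s2.2.1 h1 h2
          rw [hwa0, hwc] at t0 t1 t2
          simp only [fin3_d20, fin3_d21, fin3_d22, fin3_d10, fin3_d11, fin3_d12,
            fin3_d01, fin3_d02, fin3_d00, if_true, if_false] at t0 t1 t2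
          have u0 : pcount w k 0 = pcount w i0 0 := by
            apply pcount_no w (by omega) 0
            intro j hj hji hjk he
            have hv := congrArg Fin.val he
            rcases eq_or_lt_of_le hji with rfl | h'
            · have hc2' : (w ⟨i0, hj⟩).val = 2 := hc2
              omega
            · exact hc0min j h' (by omega) hj hv
          have u1 : pcount w k 1 = pcount w (a0 + 1) 1 := by
            apply pcount_no w (by omega) 1
            intro j hj hji hjk he
            exact ha0gr j (by omega) (by omega) ⟨hj, congrArg Fin.val he⟩
          have v1 := pcount_succ' w a0 ha0n 1
          rw [ha0val, fin3_val1, if_pos rfl] at v1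
          have w1 : pcount w i0 1 ≤ pcount w a0 1 := pcount_mono w (le_of_lt hcase) 1
          obtain ⟨N1, N2⟩ := hw k
          constructor <;> omega
        · rw [s0.2.2 h2, s1.2.2 h2, s2.2.2 h2]; exact hw k
      · rw [hwc, hwa0]; decide
    · -- no 0 in (i0, c0) and no 1 either: swap the + at i0 with the - at c0
      have hmidA : ∀ j (hj : j < 3 * n), i0 ≤ j → j < c0 → w ⟨j, hj⟩ = 2 := by
        intro j hj h1 h2
        rcases eq_or_lt_of_le h1 with rfl | h1'
        · exact hw2
        · have hne0 : (w ⟨j, hj⟩).val ≠ 0 := hc0min j h1' h2 hj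
          have hne1 : (w ⟨j, hj⟩).val ≠ 1 := by
            intro hv
            exact ha0gr j (by omega) (by omega) ⟨hj, hv⟩
          have := (w ⟨j, hj⟩).isLt
          exact Fin.ext (by omega)
      have habF : (⟨i0, hi0n⟩ : Fin (3 * n)) < ⟨c0, hc0n⟩ := by
        show i0 < c0; omega
      refine ⟨swapWord w ⟨i0, hi0n⟩ ⟨c0, hc0n⟩, ?_, ⟨i0, hi0n⟩, ⟨c0, hc0n⟩, habF, ?_, rfl⟩
      · intro k
        have s0 := swap_pcount w _ _ habF 0 k
        have s1 := swap_pcount w _ _ habF 1 k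
        have s2 := swap_pcount w _ _ habF 2 k
        rcases le_or_gt k i0 with h1 | h1
        · rw [s0.1 h1, s1.1 h1, s2.1 h1]; exact hw k
        rcases le_or_gt k c0 with h2 | h2
        · have t0 := s0.2.1 h1 h2
          have t1 := s1.2.1 h1 h2
          have t2 := s2.2.1 h1 h2
          rw [hw2, hwc] at t0 t1 t2
          simp only [fin3_d20, fin3_d21, fin3_d22, fin3_d10, fin3_d11, fin3_d12,
            fin3_d01, fin3_d02, fin3_d00, if_true, if_false] at t0 t1 t2
          have u2 : pcount w k 2 = pcount w i0 2 + (k - i0) :=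
            pcount_run w (le_of_lt h1) (by omega) 2
              (fun j hj ha hb => hmidA j hj ha (by omega))
          have u1 : pcount w k 1 = pcount w i0 1 :=
            pcount_no w (le_of_lt h1) 1
              (fun j hj ha hb => by rw [hmidA j hj ha (by omega)]; decide)
          have u0 : pcount w k 0 = pcount w i0 0 :=
            pcount_no w (le_of_lt h1) 0
              (fun j hj ha hb => by rw [hmidA j hj ha (by omega)]; decide)
          constructor <;> omega
        · rw [s0.2.2 h2, s1.2.2 h2, s2.2.2 h2]; exact hw k
      · rw [hwc, hw2]; decide

/-- `(+0-)^n` is a lattice word with `n` of each letter, and among the lattice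
words with `n` of each letter it is the unique minimal element for the swap
relation `≺` (hence for its transitive closure): a lattice word `w` admits no
lattice word `v` with `v ≺ w` if and only if `w = (+0-)^n`. -/
theorem stmt17 (n : ℕ) :
    IsLatticeWord (minWord n) ∧
    (∀ ℓ : Fin 3, (Finset.univ.filter (fun i => minWord n i = ℓ)).card = n) ∧
    (∀ w : Fin (3 * n) → Fin 3, IsLatticeWord w →
      (∀ ℓ : Fin 3, (Finset.univ.filter (fun i => w i = ℓ)).card = n) →
      ((¬ ∃ v, PrecL v w) ↔ w = minWord n)) := by
  refine ⟨minWord_lattice n, minWord_count n, ?_⟩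
  intro w hw hcard
  constructor
  · intro hmin
    by_contra hne
    exact hmin (exists_prec w hw
      (fun ℓ => by rw [← card_filter_eq_pcount]; exact hcard ℓ) hne)
  · intro h
    subst h
    exact minWord_minimal n
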